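/- The optimal model-averaging risk over the unit simplex equals R_n(w*) = tr(P_1 Ω) + Σ_{m=2}^{M} v_m b_m/(b_m + v_m) + μᵀ(I − P_M)μ, provided the sequence γ*_m = b_m/(b_m + v_m) is non-increasing in m (so that the minimizing γ's correspond to a valid weight vector in the simplex with γ_1 = 1). -/

import Mathlib

open Matrix Finset

/-!
Write `Δₘ = Pₘ - Pₘ₋₁`. Nestedness makes the `Δₘ` mutually orthogonal idempotents, and Abel
summation rewrites `P(w) = ∑ₘ wₘ Pₘ` as `∑ₘ γₘ Δₘ` with the tail sums `γₘ = ∑_{j ≥ m} wⱼ`. Hence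
`P(w)² = ∑ γₘ² Δₘ` and `(P(w) - I)² = ∑ (γₘ - 1)² Δₘ + (I - P_M)`, so the risk decouples into
`∑ₘ ((γₘ - 1)² bₘ + γₘ² vₘ) + μᵀ(I - P_M)μ`. On the simplex `γ₁ = 1`, and every other summand is a
one-dimensional quadratic in `γₘ`, minimised at `γₘ = bₘ / (bₘ + vₘ)` with value
`vₘ bₘ / (bₘ + vₘ)`. Monotonicity of these minimisers is exactly what makes the weights
`wₘ = γₘ - γₘ₊₁` nonnegative.
-/

def tailSum {α : Type*} [AddCommMonoid α] (M : ℕ) (w : ℕ → α) (m : ℕ) : α :=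
  ∑ j ∈ Icc m M, w j

lemma sum_Icc_one_eq_add_sum_Icc_two {α : Type*} [AddCommMonoid α] {M : ℕ} (hM : 1 ≤ M)
    (f : ℕ → α) : ∑ m ∈ Icc 1 M, f m = f 1 + ∑ m ∈ Icc 2 M, f m := by
  rw [← add_sum_Ioc_eq_sum_Icc hM, ← Icc_add_one_left_eq_Ioc]
  rfl

lemma sum_Icc_one_sub_pred {G : Type*} [AddCommGroup G] (f : ℕ → G) (k : ℕ) :
    ∑ m ∈ Icc 1 k, (f m - f (m - 1)) = f k - f 0 := by
  induction k with
  | zero => simp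
  | succ k ih => rw [sum_Icc_succ_top (by omega), ih]; simp

lemma tailSum_sub_succ {G : Type*} [AddCommGroup G] (γ : ℕ → G) {M m : ℕ} (hm : m ≤ M) :
    tailSum M (fun j => γ j - γ (j + 1)) m = γ m - γ (M + 1) := by
  rw [tailSum, ← neg_sub, ← sum_Icc_sub hm, ← sum_neg_distrib]
  simp only [neg_sub]

lemma sum_smul_eq_sum_tailSum_smul_sub {𝕜 E : Type*} [Ring 𝕜] [AddCommGroup E] [Module 𝕜 E]
    (M : ℕ) (w : ℕ → 𝕜) {f : ℕ → E} (hf0 : f 0 = 0) :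
    ∑ m ∈ Icc 1 M, w m • f m = ∑ m ∈ Icc 1 M, tailSum M w m • (f m - f (m - 1)) := by
  simp only [tailSum, sum_smul]
  rw [sum_comm' (t' := Icc 1 M) (s' := fun j => Icc 1 j) (by intro m j; simp only [mem_Icc]; omega)]
  refine sum_congr rfl fun j _ => ?_
  rw [← smul_sum, sum_Icc_one_sub_pred, hf0, sub_zero]

section Chain

variable {R : Type*} [Ring R] {P : ℕ → R} {M : ℕ}

lemma incr_mul_incr (hmin : ∀ i j, i ≤ M → j ≤ M → P i * P j = P (min i j))
    {i j : ℕ} (hi : i ≤ M) (hj : j ≤ M) :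
    (P i - P (i - 1)) * (P j - P (j - 1)) = if i = j then P i - P (i - 1) else 0 := by
  simp only [sub_mul, mul_sub, hmin _ _ hi hj, hmin _ _ hi (j.sub_le 1 |>.trans hj),
    hmin _ _ (i.sub_le 1 |>.trans hi) hj, hmin _ _ (i.sub_le 1 |>.trans hi) (j.sub_le 1 |>.trans hj)]
  rcases lt_trichotomy i j with h | rfl | h
  · rw [if_neg h.ne, min_eq_left h.le, min_eq_left (by omega), min_eq_left (by omega),
      min_eq_left (by omega)]
    abel
  · simp
  · rw [if_neg h.ne', min_eq_right h.le, min_eq_right (by omega), min_eq_right (by omega),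
      min_eq_right (by omega)]
    abel

variable {𝕜 : Type*} [CommRing 𝕜] [Algebra 𝕜 R]

lemma sum_smul_incr_mul_self (hmin : ∀ i j, i ≤ M → j ≤ M → P i * P j = P (min i j))
    (γ : ℕ → 𝕜) :
    (∑ m ∈ Icc 1 M, γ m • (P m - P (m - 1))) * (∑ m ∈ Icc 1 M, γ m • (P m - P (m - 1)))
      = ∑ m ∈ Icc 1 M, γ m ^ 2 • (P m - P (m - 1)) := by
  rw [sum_mul_sum]
  refine sum_congr rfl fun i hi => ?_
  have hiM := (mem_Icc.1 hi).2
  rw [sum_eq_single_of_mem i hi fun j hj hji => ?_]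
  · rw [smul_mul_smul, incr_mul_incr hmin hiM hiM, if_pos rfl, sq]
  · rw [smul_mul_smul, incr_mul_incr hmin hiM (mem_Icc.1 hj).2, if_neg hji.symm, smul_zero]

lemma sum_smul_incr_sub_one_mul_self (hP0 : P 0 = 0)
    (hmin : ∀ i j, i ≤ M → j ≤ M → P i * P j = P (min i j)) (γ : ℕ → 𝕜) :
    (∑ m ∈ Icc 1 M, γ m • (P m - P (m - 1)) - 1) * (∑ m ∈ Icc 1 M, γ m • (P m - P (m - 1)) - 1)
      = ∑ m ∈ Icc 1 M, (γ m - 1) ^ 2 • (P m - P (m - 1)) + (1 - P M) := by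
  have hexp : ∑ m ∈ Icc 1 M, (γ m - 1) ^ 2 • (P m - P (m - 1))
      = ∑ m ∈ Icc 1 M, γ m ^ 2 • (P m - P (m - 1))
        - 2 • ∑ m ∈ Icc 1 M, γ m • (P m - P (m - 1)) + P M := by
    rw [← sub_zero (P M), ← hP0, ← sum_Icc_one_sub_pred, smul_sum, ← sum_sub_distrib,
      ← sum_add_distrib]
    exact sum_congr rfl fun m _ => by module
  rw [hexp, ← sum_smul_incr_mul_self hmin]
  noncomm_ring

end Chain

lemma Matrix.dotProduct_mulVec_nonneg_of_isSymm_of_isIdempotentElem {ι : Type*} [Fintype ι]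
    {A : Matrix ι ι ℝ} (hsymm : A.IsSymm) (hidem : IsIdempotentElem A) (x : ι → ℝ) :
    0 ≤ x ⬝ᵥ (A *ᵥ x) := by
  have h := (posSemidef_conjTranspose_mul_self A).dotProduct_mulVec_nonneg x
  rwa [conjTranspose_eq_transpose_of_trivial, hsymm.eq, hidem.eq, star_trivial] at h

def shrinkageLoss (b v γ : ℝ) : ℝ := (γ - 1) ^ 2 * b + γ ^ 2 * v

lemma shrinkageLoss_one (b v : ℝ) : shrinkageLoss b v 1 = v := by simp [shrinkageLoss]

lemma mul_div_add_le_shrinkageLoss {b v : ℝ} (h : 0 < b + v) (γ : ℝ) :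
    v * b / (b + v) ≤ shrinkageLoss b v γ := by
  rw [div_le_iff₀ h, shrinkageLoss]
  nlinarith [sq_nonneg ((b + v) * γ - b)]

lemma shrinkageLoss_div_add {b v : ℝ} (h : b + v ≠ 0) :
    shrinkageLoss b v (b / (b + v)) = v * b / (b + v) := by
  rw [shrinkageLoss]
  field_simp
  ring

-- The tail sums `γₘ` of the optimal weights: `γ₁ = 1` is forced by the simplex constraint.
def shrinkageProfile (M : ℕ) (q : ℕ → ℝ) (m : ℕ) : ℝ :=
  if m = 1 then 1 else if m ≤ M then q m else 0

section Profile

variable {M : ℕ} {q : ℕ → ℝ}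

lemma shrinkageProfile_one : shrinkageProfile M q 1 = 1 := if_pos rfl

lemma shrinkageProfile_of_mem_Icc {m : ℕ} (hm : m ∈ Icc 2 M) : shrinkageProfile M q m = q m := by
  rw [shrinkageProfile, if_neg (by grind), if_pos (mem_Icc.1 hm).2]

lemma tailSum_shrinkageProfile_sub_succ (hM : 1 ≤ M) {m : ℕ} (hm : m ≤ M) :
    tailSum M (fun j => shrinkageProfile M q j - shrinkageProfile M q (j + 1)) m
      = shrinkageProfile M q m := by
  have hM1 : shrinkageProfile M q (M + 1) = 0 := by
    rw [shrinkageProfile, if_neg (by omega), if_neg (by omega)]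
  rw [tailSum_sub_succ _ hm, hM1, sub_zero]

lemma shrinkageProfile_succ_le (hq0 : ∀ m ∈ Icc 2 M, 0 ≤ q m)
    (hq1 : ∀ m ∈ Icc 2 M, q m ≤ 1) (hanti : ∀ m ∈ Icc 2 (M - 1), q (m + 1) ≤ q m)
    {m : ℕ} (hm : 1 ≤ m) : shrinkageProfile M q (m + 1) ≤ shrinkageProfile M q m := by
  unfold shrinkageProfile
  split_ifs <;> first
    | exact hq0 _ (mem_Icc.2 ⟨by omega, by omega⟩)
    | exact hq1 _ (mem_Icc.2 ⟨by omega, by omega⟩)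
    | exact hanti _ (mem_Icc.2 ⟨by omega, by omega⟩)
    | omega
    | norm_num

end Profile

section Risk

variable {ι : Type*} [Fintype ι]

def averagedProjection (M : ℕ) (P : ℕ → Matrix ι ι ℝ) (w : ℕ → ℝ) : Matrix ι ι ℝ :=
  ∑ m ∈ Icc 1 M, w m • P m

def maRisk [DecidableEq ι] (M : ℕ) (P : ℕ → Matrix ι ι ℝ) (Ω : Matrix ι ι ℝ) (μ : ι → ℝ)
    (w : ℕ → ℝ) : ℝ :=
  μ ⬝ᵥ (((averagedProjection M P w - 1) * (averagedProjection M P w - 1)) *ᵥ μ)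
    + (averagedProjection M P w * averagedProjection M P w * Ω).trace

def biasIncrement (P : ℕ → Matrix ι ι ℝ) (μ : ι → ℝ) (m : ℕ) : ℝ :=
  μ ⬝ᵥ ((P m - P (m - 1)) *ᵥ μ)

def varianceIncrement (P : ℕ → Matrix ι ι ℝ) (Ω : Matrix ι ι ℝ) (m : ℕ) : ℝ :=
  ((P m - P (m - 1)) * Ω).trace

variable {M : ℕ} {P : ℕ → Matrix ι ι ℝ} (Ω : Matrix ι ι ℝ) (μ : ι → ℝ)

lemma varianceIncrement_one (hP0 : P 0 = 0) : varianceIncrement P Ω 1 = (P 1 * Ω).trace := by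
  simp [varianceIncrement, hP0]

variable [DecidableEq ι]

lemma biasIncrement_nonneg (hmin : ∀ i j, i ≤ M → j ≤ M → P i * P j = P (min i j))
    (hsymm : ∀ i, i ≤ M → (P i)ᵀ = P i) {m : ℕ} (hm : m ≤ M) : 0 ≤ biasIncrement P μ m := by
  refine dotProduct_mulVec_nonneg_of_isSymm_of_isIdempotentElem ?_ ?_ μ
  · rw [IsSymm, transpose_sub, hsymm m hm, hsymm (m - 1) (by omega)]
  · exact (incr_mul_incr hmin hm hm).trans (if_pos rfl)

lemma maRisk_eq_sum (hP0 : P 0 = 0) (hmin : ∀ i j, i ≤ M → j ≤ M → P i * P j = P (min i j))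
    (w : ℕ → ℝ) :
    maRisk M P Ω μ w = ∑ m ∈ Icc 1 M,
        shrinkageLoss (biasIncrement P μ m) (varianceIncrement P Ω m) (tailSum M w m)
      + μ ⬝ᵥ ((1 - P M) *ᵥ μ) := by
  rw [maRisk, averagedProjection, sum_smul_eq_sum_tailSum_smul_sub M w hP0,
    sum_smul_incr_sub_one_mul_self hP0 hmin, sum_smul_incr_mul_self hmin]
  simp only [add_mulVec, sum_mulVec, smul_mulVec, dotProduct_add, dotProduct_sum, dotProduct_smul,
    sum_mul, trace_sum, smul_mul_assoc, trace_smul, smul_eq_mul, sum_add_distrib,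
    shrinkageLoss, biasIncrement, varianceIncrement]
  ring

variable (hM : 1 ≤ M) (hP0 : P 0 = 0) (hmin : ∀ i j, i ≤ M → j ≤ M → P i * P j = P (min i j))
  (hbv : ∀ m ∈ Icc 1 M, 0 < biasIncrement P μ m + varianceIncrement P Ω m)
include hM hP0 hmin hbv

lemma le_maRisk {w : ℕ → ℝ} (hw : ∑ m ∈ Icc 1 M, w m = 1) :
    (P 1 * Ω).trace + ∑ m ∈ Icc 2 M, varianceIncrement P Ω m * biasIncrement P μ m
        / (biasIncrement P μ m + varianceIncrement P Ω m) + μ ⬝ᵥ ((1 - P M) *ᵥ μ)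
      ≤ maRisk M P Ω μ w := by
  rw [maRisk_eq_sum Ω μ hP0 hmin, sum_Icc_one_eq_add_sum_Icc_two hM, tailSum, hw,
    shrinkageLoss_one, varianceIncrement_one Ω hP0]
  gcongr with m hm
  exact mul_div_add_le_shrinkageLoss (hbv m (Icc_subset_Icc_left one_le_two hm)) _

lemma maRisk_shrinkageProfile :
    let g := shrinkageProfile M fun m =>
      biasIncrement P μ m / (biasIncrement P μ m + varianceIncrement P Ω m)
    maRisk M P Ω μ (fun m => g m - g (m + 1))
      = (P 1 * Ω).trace + ∑ m ∈ Icc 2 M, varianceIncrement P Ω m * biasIncrement P μ m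
          / (biasIncrement P μ m + varianceIncrement P Ω m) + μ ⬝ᵥ ((1 - P M) *ᵥ μ) := by
  intro g
  rw [maRisk_eq_sum Ω μ hP0 hmin, sum_Icc_one_eq_add_sum_Icc_two hM,
    tailSum_shrinkageProfile_sub_succ hM hM, shrinkageProfile_one, shrinkageLoss_one,
    varianceIncrement_one Ω hP0]
  congr 2
  refine sum_congr rfl fun m hm => ?_
  rw [tailSum_shrinkageProfile_sub_succ hM (mem_Icc.1 hm).2, shrinkageProfile_of_mem_Icc hm,
    shrinkageLoss_div_add (hbv m (Icc_subset_Icc_left one_le_two hm)).ne']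

end Risk

/-- The optimal model-averaging risk over the unit simplex equals
`tr(P₁Ω) + Σ_{m=2}^M v_m b_m/(b_m+v_m) + μᵀ(I−P_M)μ`, provided the sequence
`γ*_m = b_m/(b_m+v_m)` is non-increasing. -/
theorem optimal_simplex_ma_risk (n M : ℕ) (hM : 1 ≤ M)
    (P : ℕ → Matrix (Fin n) (Fin n) ℝ)
    (Ωm : Matrix (Fin n) (Fin n) ℝ) (μ : Fin n → ℝ)
    (hP0 : P 0 = 0)
    (hmin : ∀ i j, i ≤ M → j ≤ M → P i * P j = P (min i j))
    (hsymm : ∀ i, i ≤ M → (P i)ᵀ = P i)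
    (hv : ∀ m ∈ Finset.Icc 1 M, 0 < ((P m - P (m - 1)) * Ωm).trace)
    (hmono : ∀ m ∈ Finset.Icc 1 (M - 1),
      (μ ⬝ᵥ ((P (m + 1) - P m) *ᵥ μ)) /
          (μ ⬝ᵥ ((P (m + 1) - P m) *ᵥ μ) + ((P (m + 1) - P m) * Ωm).trace)
        ≤ (μ ⬝ᵥ ((P m - P (m - 1)) *ᵥ μ)) /
          (μ ⬝ᵥ ((P m - P (m - 1)) *ᵥ μ) + ((P m - P (m - 1)) * Ωm).trace)) :
    IsLeast
      {r : ℝ | ∃ w : ℕ → ℝ,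
        (∀ m ∈ Finset.Icc 1 M, 0 ≤ w m) ∧ (∑ m ∈ Finset.Icc 1 M, w m) = 1 ∧
        r = μ ⬝ᵥ ((((∑ m ∈ Finset.Icc 1 M, w m • P m) - 1) *
              ((∑ m ∈ Finset.Icc 1 M, w m • P m) - 1)) *ᵥ μ)
          + ((∑ m ∈ Finset.Icc 1 M, w m • P m) *
              (∑ m ∈ Finset.Icc 1 M, w m • P m) * Ωm).trace}
      ((P 1 * Ωm).trace
        + ∑ m ∈ Finset.Icc 2 M,
            ((P m - P (m - 1)) * Ωm).trace * (μ ⬝ᵥ ((P m - P (m - 1)) *ᵥ μ))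
              / (μ ⬝ᵥ ((P m - P (m - 1)) *ᵥ μ) + ((P m - P (m - 1)) * Ωm).trace)
        + μ ⬝ᵥ ((1 - P M) *ᵥ μ)) := by
  have hb : ∀ m ∈ Icc 1 M, 0 ≤ biasIncrement P μ m := fun m hm =>
    biasIncrement_nonneg μ hmin hsymm (mem_Icc.1 hm).2
  have hbv : ∀ m ∈ Icc 1 M, 0 < biasIncrement P μ m + varianceIncrement P Ωm m := fun m hm =>
    add_pos_of_nonneg_of_pos (hb m hm) (hv m hm)
  have h21 : Icc 2 M ⊆ Icc 1 M := Icc_subset_Icc_left one_le_two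
  set g := shrinkageProfile M fun m =>
    biasIncrement P μ m / (biasIncrement P μ m + varianceIncrement P Ωm m)
  refine ⟨⟨fun m => g m - g (m + 1), fun m hm => sub_nonneg.2 ?_, ?_,
    (maRisk_shrinkageProfile Ωm μ hM hP0 hmin hbv).symm⟩, ?_⟩
  · refine shrinkageProfile_succ_le (fun m hm => ?_) (fun m hm => ?_)
      (fun m hm => hmono m (Icc_subset_Icc_left one_le_two hm)) (mem_Icc.1 hm).1
    · exact div_nonneg (hb m (h21 hm)) (hbv m (h21 hm)).le
    · exact div_le_one_of_le₀ (le_add_of_nonneg_right (hv m (h21 hm)).le) (hbv m (h21 hm)).le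
  · exact (tailSum_shrinkageProfile_sub_succ hM hM).trans shrinkageProfile_one
  · rintro r ⟨w, -, hw, rfl⟩
    exact le_maRisk Ωm μ hM hP0 hmin hbv hw
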